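/- (Family XI) In the dual bracket of the Galilei bialgebra ansatz, take a unit vector μ ∈ ℝ³ (‖μ‖ = 1) and real numbers S, L, B, θ with S ≠ 0, and set α = 0, β = 0, γ = 0, φ = 0, ξ = 0, n = 0, v = 0, ω = 0, λ_i = L μ_i, ρ = −S/3, σ_{ij} = S(μ_i μ_j − (1/3) δ_{ij}), χ_{ij} = B(μ_i μ_j − (1/3) δ_{ij}). Then the resulting bracket satisfies the Jacobi identity, and hence defines a Lie algebra structure on the 10-dimensional space spanned by H̃, P̃_i, K̃_i, J̃_i. -/
import Mathlib


/-- The Levi-Civita symbol on `{1,2,3}` (indexed by `Fin 3`). -/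
def eps (i j k : Fin 3) : ℝ :=
  if (i, j, k) = (0, 1, 2) ∨ (i, j, k) = (1, 2, 0) ∨ (i, j, k) = (2, 0, 1) then 1
  else if (i, j, k) = (2, 1, 0) ∨ (i, j, k) = (1, 0, 2) ∨ (i, j, k) = (0, 2, 1) then -1
  else 0

/-- The Kronecker delta on `Fin 3`. -/
def kron (i j : Fin 3) : ℝ := if i = j then 1 else 0

/-- The 10-dimensional real vector space with basis `H̃, P̃_i, K̃_i, J̃_i`, an element
being recorded by its coefficients `(h, p, k, j)` in this basis. -/
abbrev DualV : Type := ℝ × (Fin 3 → ℝ) × (Fin 3 → ℝ) × (Fin 3 → ℝ)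

/-- The dual bracket of the Galilei bialgebra ansatz: the antisymmetric bilinear
bracket on the span of `H̃, P̃_i, K̃_i, J̃_i` determined by the structure constants
(with parameters `α, γ, φ, λ, ξ, n ∈ ℝ³`, `β, v, θ, ρ ∈ ℝ`, `σ, χ, ω ∈ M₃(ℝ)`):
`[H̃, J̃_k] = ε_{ikl} α_l J̃_i`;
`[H̃, P̃_k] = γ_k H̃ + (β δ_{ik} + ε_{ikl} α_l) P̃_i + ε_{ikl} φ_l J̃_i`;
`[H̃, K̃_k] = (β δ_{ik} + ε_{ikl} α_l) K̃_i + ε_{ikl} γ_l J̃_i`;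
`[K̃_k, J̃_l] = 2(n_k δ_{li} − n_i δ_{kl}) K̃_i + 2(ε_{ikn} ω_{ln} + ε_{iln} ω_{nk}) J̃_i`;
`[P̃_l, P̃_m] = (χ_{lm} − χ_{ml}) H̃ + 2 ε_{klm}(ρ δ_{ki} + (1/2)(σ_{ik} − σ_{nn} δ_{ik})) P̃_i`
`  + 2(v ε_{ilm} + (1/2)(φ_l δ_{im} − φ_m δ_{il})) K̃_i + 2(λ_l δ_{im} − λ_m δ_{il}) J̃_i`;
`[P̃_k, K̃_l] = (2 ξ_n ε_{nkl} − θ δ_{kl}) H̃ + (2 ε_{nki} ω_{nl} − ω_{nn} ε_{lki}) P̃_i`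
`  + (ρ ε_{kli} − ε_{lin} σ_{kn} − δ_{ki} γ_l) K̃_i + (ε_{ikn} χ_{nl} + ε_{iln} χ_{kn}) J̃_i`;
`[P̃_k, J̃_l] = (2 ω_{lk} − ω_{nn} δ_{lk}) H̃ + 2(n_k δ_{li} − n_i δ_{kl}) P̃_i`
`  − (β ε_{kli} + α_l δ_{ki}) K̃_i + (ε_{ikn} σ_{nl} + ε_{iln} σ_{kn}) J̃_i`;
`[K̃_m, K̃_n] = 2 ε_{kmn} ω_{ki} K̃_i + 2(ξ_m δ_{ni} − ξ_n δ_{mi}) J̃_i`;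
`[J̃_k, J̃_l] = 2(n_k δ_{li} − n_l δ_{ki}) J̃_i`. -/
noncomputable def dualBracket (α γv φv lam ξ nv : Fin 3 → ℝ) (β v θ ρ : ℝ)
    (σ χ ω : Fin 3 → Fin 3 → ℝ) (X Y : DualV) : DualV :=
  -- coefficients of `X` and `Y` on `H̃, P̃, K̃, J̃`
  let h : ℝ := X.1; let p := X.2.1; let κ := X.2.2.1; let j := X.2.2.2
  let h' : ℝ := Y.1; let p' := Y.2.1; let κ' := Y.2.2.1; let j' := Y.2.2.2
  ( -- H̃ component
    (∑ k, (h * p' k - h' * p k) * γv k)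
    + (∑ l, ∑ m, p l * p' m * (χ l m - χ m l))
    + (∑ k, ∑ l, (p k * κ' l - p' k * κ l) * (2 * (∑ n, ξ n * eps n k l) - θ * kron k l))
    + (∑ k, ∑ l, (p k * j' l - p' k * j l) * (2 * ω l k - (∑ n, ω n n) * kron l k)),
    -- P̃ component
    fun i =>
      (∑ k, (h * p' k - h' * p k) * (β * kron i k + ∑ l, eps i k l * α l))
      + (∑ l, ∑ m, p l * p' m *
          (2 * ∑ k, eps k l m * (ρ * kron k i + (1/2) * (σ i k - (∑ n, σ n n) * kron i k))))
      + (∑ k, ∑ l, (p k * κ' l - p' k * κ l) *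
          (2 * (∑ n, eps n k i * ω n l) - (∑ n, ω n n) * eps l k i))
      + (∑ k, ∑ l, (p k * j' l - p' k * j l) * (2 * (nv k * kron l i - nv i * kron k l))),
    -- K̃ component
    fun i =>
      (∑ k, (h * κ' k - h' * κ k) * (β * kron i k + ∑ l, eps i k l * α l))
      + (∑ k, ∑ l, (κ k * j' l - κ' k * j l) * (2 * (nv k * kron l i - nv i * kron k l)))
      + (∑ l, ∑ m, p l * p' m *
          (2 * (v * eps i l m + (1/2) * (φv l * kron i m - φv m * kron i l))))
      + (∑ k, ∑ l, (p k * κ' l - p' k * κ l) *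
          (ρ * eps k l i - (∑ n, eps l i n * σ k n) - kron k i * γv l))
      + (∑ k, ∑ l, (p k * j' l - p' k * j l) * (-(β * eps k l i + α l * kron k i)))
      + (∑ m, ∑ n, κ m * κ' n * (2 * ∑ k, eps k m n * ω k i)),
    -- J̃ component
    fun i =>
      (∑ k, (h * j' k - h' * j k) * (∑ l, eps i k l * α l))
      + (∑ k, (h * p' k - h' * p k) * (∑ l, eps i k l * φv l))
      + (∑ k, (h * κ' k - h' * κ k) * (∑ l, eps i k l * γv l))
      + (∑ k, ∑ l, (κ k * j' l - κ' k * j l) *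
          (2 * ∑ n, (eps i k n * ω l n + eps i l n * ω n k)))
      + (∑ l, ∑ m, p l * p' m * (2 * (lam l * kron i m - lam m * kron i l)))
      + (∑ k, ∑ l, (p k * κ' l - p' k * κ l) * (∑ n, (eps i k n * χ n l + eps i l n * χ k n)))
      + (∑ k, ∑ l, (p k * j' l - p' k * j l) * (∑ n, (eps i k n * σ n l + eps i l n * σ k n)))
      + (∑ m, ∑ n, κ m * κ' n * (2 * (ξ m * kron n i - ξ n * kron m i)))
      + (∑ k, ∑ l, j k * j' l * (2 * (nv k * kron l i - nv l * kron k i))) )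

/-- A bracket operation on `DualV` satisfies the Jacobi identity. -/
def JacobiHolds (br : DualV → DualV → DualV) : Prop :=
  ∀ X Y Z : DualV, br X (br Y Z) + br Z (br X Y) + br Y (br Z X) = 0


set_option maxHeartbeats 1000000 in
lemma br_eval (μ : Fin 3 → ℝ) (S L B θ : ℝ) (xh : ℝ) (xp xk xj : Fin 3 → ℝ)
    (yh : ℝ) (yp yk yj : Fin 3 → ℝ) :
    dualBracket 0 0 0 (fun i => L * μ i) 0 0 0 0 θ (-S / 3)
      (fun i j => S * (μ i * μ j - (1/3) * kron i j))
      (fun i j => B * (μ i * μ j - (1/3) * kron i j)) 0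
      (xh, xp, xk, xj) (yh, yp, yk, yj) =
  ( (xk 2 * yp 2 * θ + xk 1 * yp 1 * θ + xk 0 * yp 0 * θ + (-1:ℝ) * xp 2 * yk 2 * θ + (-1:ℝ) * xp 1 * yk 1 * θ + (-1:ℝ) * xp 0 * yk 0 * θ),
  (fun i => if i = 0 then (xp 2 * yp 1 * μ 2 * μ 2 * S + xp 2 * yp 1 * μ 1 * μ 1 * S + xp 2 * yp 0 * μ 0 * μ 1 * S + (-1:ℝ) * xp 1 * yp 2 * μ 2 * μ 2 * S + (-1:ℝ) * xp 1 * yp 2 * μ 1 * μ 1 * S + (-1:ℝ) * xp 1 * yp 0 * μ 0 * μ 2 * S + (-1:ℝ) * xp 0 * yp 2 * μ 0 * μ 1 * S + xp 0 * yp 1 * μ 0 * μ 2 * S)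
    else if i = 1 then ((-1:ℝ) * xp 2 * yp 1 * μ 0 * μ 1 * S + (-1:ℝ) * xp 2 * yp 0 * μ 2 * μ 2 * S + (-1:ℝ) * xp 2 * yp 0 * μ 0 * μ 0 * S + xp 1 * yp 2 * μ 0 * μ 1 * S + (-1:ℝ) * xp 1 * yp 0 * μ 1 * μ 2 * S + xp 0 * yp 2 * μ 2 * μ 2 * S + xp 0 * yp 2 * μ 0 * μ 0 * S + xp 0 * yp 1 * μ 1 * μ 2 * S)
    else ((-1:ℝ) * xp 2 * yp 1 * μ 0 * μ 2 * S + xp 2 * yp 0 * μ 1 * μ 2 * S + xp 1 * yp 2 * μ 0 * μ 2 * S + xp 1 * yp 0 * μ 1 * μ 1 * S + xp 1 * yp 0 * μ 0 * μ 0 * S + (-1:ℝ) * xp 0 * yp 2 * μ 1 * μ 2 * S + (-1:ℝ) * xp 0 * yp 1 * μ 1 * μ 1 * S + (-1:ℝ) * xp 0 * yp 1 * μ 0 * μ 0 * S)),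
  (fun i => if i = 0 then (xk 2 * yp 2 * μ 1 * μ 2 * S + xk 2 * yp 1 * μ 1 * μ 1 * S + xk 2 * yp 0 * μ 0 * μ 1 * S + (-1:ℝ) * xk 1 * yp 2 * μ 2 * μ 2 * S + (-1:ℝ) * xk 1 * yp 1 * μ 1 * μ 2 * S + (-1:ℝ) * xk 1 * yp 0 * μ 0 * μ 2 * S + (-1:ℝ) * xp 2 * yk 2 * μ 1 * μ 2 * S + xp 2 * yk 1 * μ 2 * μ 2 * S + (-1:ℝ) * xp 1 * yk 2 * μ 1 * μ 1 * S + xp 1 * yk 1 * μ 1 * μ 2 * S + (-1:ℝ) * xp 0 * yk 2 * μ 0 * μ 1 * S + xp 0 * yk 1 * μ 0 * μ 2 * S)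
    else if i = 1 then ((-1:ℝ) * xk 2 * yp 2 * μ 0 * μ 2 * S + (-1:ℝ) * xk 2 * yp 1 * μ 0 * μ 1 * S + (-1:ℝ) * xk 2 * yp 0 * μ 0 * μ 0 * S + xk 0 * yp 2 * μ 2 * μ 2 * S + xk 0 * yp 1 * μ 1 * μ 2 * S + xk 0 * yp 0 * μ 0 * μ 2 * S + xp 2 * yk 2 * μ 0 * μ 2 * S + (-1:ℝ) * xp 2 * yk 0 * μ 2 * μ 2 * S + xp 1 * yk 2 * μ 0 * μ 1 * S + (-1:ℝ) * xp 1 * yk 0 * μ 1 * μ 2 * S + xp 0 * yk 2 * μ 0 * μ 0 * S + (-1:ℝ) * xp 0 * yk 0 * μ 0 * μ 2 * S)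
    else (xk 1 * yp 2 * μ 0 * μ 2 * S + xk 1 * yp 1 * μ 0 * μ 1 * S + xk 1 * yp 0 * μ 0 * μ 0 * S + (-1:ℝ) * xk 0 * yp 2 * μ 1 * μ 2 * S + (-1:ℝ) * xk 0 * yp 1 * μ 1 * μ 1 * S + (-1:ℝ) * xk 0 * yp 0 * μ 0 * μ 1 * S + (-1:ℝ) * xp 2 * yk 1 * μ 0 * μ 2 * S + xp 2 * yk 0 * μ 1 * μ 2 * S + (-1:ℝ) * xp 1 * yk 1 * μ 0 * μ 1 * S + xp 1 * yk 0 * μ 1 * μ 1 * S + (-1:ℝ) * xp 0 * yk 1 * μ 0 * μ 0 * S + xp 0 * yk 0 * μ 0 * μ 1 * S)),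
  (fun i => if i = 0 then ((2:ℝ) * xj 2 * yp 2 * μ 1 * μ 2 * S + (-1:ℝ) * xj 2 * yp 1 * μ 2 * μ 2 * S + xj 2 * yp 1 * μ 1 * μ 1 * S + xj 2 * yp 0 * μ 0 * μ 1 * S + (-1:ℝ) * xj 1 * yp 2 * μ 2 * μ 2 * S + xj 1 * yp 2 * μ 1 * μ 1 * S + (-2:ℝ) * xj 1 * yp 1 * μ 1 * μ 2 * S + (-1:ℝ) * xj 1 * yp 0 * μ 0 * μ 2 * S + xj 0 * yp 2 * μ 0 * μ 1 * S + (-1:ℝ) * xj 0 * yp 1 * μ 0 * μ 2 * S + (2:ℝ) * xk 2 * yp 2 * μ 1 * μ 2 * B + (-1:ℝ) * xk 2 * yp 1 * μ 2 * μ 2 * B + xk 2 * yp 1 * μ 1 * μ 1 * B + xk 2 * yp 0 * μ 0 * μ 1 * B + (-1:ℝ) * xk 1 * yp 2 * μ 2 * μ 2 * B + xk 1 * yp 2 * μ 1 * μ 1 * B + (-2:ℝ) * xk 1 * yp 1 * μ 1 * μ 2 * B + (-1:ℝ) * xk 1 * yp 0 * μ 0 * μ 2 * B + xk 0 * yp 2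 * μ 0 * μ 1 * B + (-1:ℝ) * xk 0 * yp 1 * μ 0 * μ 2 * B + (-2:ℝ) * xp 2 * yj 2 * μ 1 * μ 2 * S + xp 2 * yj 1 * μ 2 * μ 2 * S + (-1:ℝ) * xp 2 * yj 1 * μ 1 * μ 1 * S + (-1:ℝ) * xp 2 * yj 0 * μ 0 * μ 1 * S + (-2:ℝ) * xp 2 * yk 2 * μ 1 * μ 2 * B + xp 2 * yk 1 * μ 2 * μ 2 * B + (-1:ℝ) * xp 2 * yk 1 * μ 1 * μ 1 * B + (-1:ℝ) * xp 2 * yk 0 * μ 0 * μ 1 * B + (2:ℝ) * xp 2 * yp 0 * μ 2 * L + xp 1 * yj 2 * μ 2 * μ 2 * S + (-1:ℝ) * xp 1 * yj 2 * μ 1 * μ 1 * S + (2:ℝ) * xp 1 * yj 1 * μ 1 * μ 2 * S + xp 1 * yj 0 * μ 0 * μ 2 * S + xp 1 * yk 2 * μ 2 * μ 2 * B + (-1:ℝ) * xp 1 * yk 2 * μ 1 * μ 1 * B + (2:ℝ) * xp 1 * yk 1 * μ 1 * μ 2 * B + xp 1 * yk 0 * μ 0 * μ 2 * B + (2:ℝ)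 * xp 1 * yp 0 * μ 1 * L + (-1:ℝ) * xp 0 * yj 2 * μ 0 * μ 1 * S + xp 0 * yj 1 * μ 0 * μ 2 * S + (-1:ℝ) * xp 0 * yk 2 * μ 0 * μ 1 * B + xp 0 * yk 1 * μ 0 * μ 2 * B + (-2:ℝ) * xp 0 * yp 2 * μ 2 * L + (-2:ℝ) * xp 0 * yp 1 * μ 1 * L)
    else if i = 1 then ((-2:ℝ) * xj 2 * yp 2 * μ 0 * μ 2 * S + (-1:ℝ) * xj 2 * yp 1 * μ 0 * μ 1 * S + xj 2 * yp 0 * μ 2 * μ 2 * S + (-1:ℝ) * xj 2 * yp 0 * μ 0 * μ 0 * S + (-1:ℝ) * xj 1 * yp 2 * μ 0 * μ 1 * S + xj 1 * yp 0 * μ 1 * μ 2 * S + xj 0 * yp 2 * μ 2 * μ 2 * S + (-1:ℝ) * xj 0 * yp 2 * μ 0 * μ 0 * S + xj 0 * yp 1 * μ 1 * μ 2 * S + (2:ℝ) * xj 0 * yp 0 * μ 0 * μ 2 * S + (-2:ℝ) * xk 2 * yp 2 * μ 0 * μ 2 * B + (-1:ℝ) * xk 2 * yp 1 * μ 0 *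 μ 1 * B + xk 2 * yp 0 * μ 2 * μ 2 * B + (-1:ℝ) * xk 2 * yp 0 * μ 0 * μ 0 * B + (-1:ℝ) * xk 1 * yp 2 * μ 0 * μ 1 * B + xk 1 * yp 0 * μ 1 * μ 2 * B + xk 0 * yp 2 * μ 2 * μ 2 * B + (-1:ℝ) * xk 0 * yp 2 * μ 0 * μ 0 * B + xk 0 * yp 1 * μ 1 * μ 2 * B + (2:ℝ) * xk 0 * yp 0 * μ 0 * μ 2 * B + (2:ℝ) * xp 2 * yj 2 * μ 0 * μ 2 * S + xp 2 * yj 1 * μ 0 * μ 1 * S + (-1:ℝ) * xp 2 * yj 0 * μ 2 * μ 2 * S + xp 2 * yj 0 * μ 0 * μ 0 * S + (2:ℝ) * xp 2 * yk 2 * μ 0 * μ 2 * B + xp 2 * yk 1 * μ 0 * μ 1 * B + (-1:ℝ) * xp 2 * yk 0 * μ 2 * μ 2 * B + xp 2 * yk 0 * μ 0 * μ 0 * B + (2:ℝ) * xp 2 * yp 1 * μ 2 * L + xp 1 * yj 2 * μ 0 * μ 1 * S + (-1:ℝ) * xp 1 * yj 0 * μ 1 * μ 2 * S + xp 1 * yk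 2 * μ 0 * μ 1 * B + (-1:ℝ) * xp 1 * yk 0 * μ 1 * μ 2 * B + (-2:ℝ) * xp 1 * yp 2 * μ 2 * L + (-2:ℝ) * xp 1 * yp 0 * μ 0 * L + (-1:ℝ) * xp 0 * yj 2 * μ 2 * μ 2 * S + xp 0 * yj 2 * μ 0 * μ 0 * S + (-1:ℝ) * xp 0 * yj 1 * μ 1 * μ 2 * S + (-2:ℝ) * xp 0 * yj 0 * μ 0 * μ 2 * S + (-1:ℝ) * xp 0 * yk 2 * μ 2 * μ 2 * B + xp 0 * yk 2 * μ 0 * μ 0 * B + (-1:ℝ) * xp 0 * yk 1 * μ 1 * μ 2 * B + (-2:ℝ) * xp 0 * yk 0 * μ 0 * μ 2 * B + (2:ℝ) * xp 0 * yp 1 * μ 0 * L)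
    else (xj 2 * yp 1 * μ 0 * μ 2 * S + (-1:ℝ) * xj 2 * yp 0 * μ 1 * μ 2 * S + xj 1 * yp 2 * μ 0 * μ 2 * S + (2:ℝ) * xj 1 * yp 1 * μ 0 * μ 1 * S + (-1:ℝ) * xj 1 * yp 0 * μ 1 * μ 1 * S + xj 1 * yp 0 * μ 0 * μ 0 * S + (-1:ℝ) * xj 0 * yp 2 * μ 1 * μ 2 * S + (-1:ℝ) * xj 0 * yp 1 * μ 1 * μ 1 * S + xj 0 * yp 1 * μ 0 * μ 0 * S + (-2:ℝ) * xj 0 * yp 0 * μ 0 * μ 1 * S + xk 2 * yp 1 * μ 0 * μ 2 * B + (-1:ℝ) * xk 2 * yp 0 * μ 1 * μ 2 * B + xk 1 * yp 2 * μ 0 * μ 2 * B + (2:ℝ) * xk 1 * yp 1 * μ 0 * μ 1 * B + (-1:ℝ) * xk 1 * yp 0 * μ 1 * μ 1 * B + xk 1 * yp 0 * μ 0 * μ 0 * B + (-1:ℝ) * xk 0 * yp 2 * μ 1 * μ 2 * B + (-1:ℝ) * xk 0 * yp 1 * μ 1 * μ 1 * B + xk 0 * yp 1 * μ 0 * μ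 0 * B + (-2:ℝ) * xk 0 * yp 0 * μ 0 * μ 1 * B + (-1:ℝ) * xp 2 * yj 1 * μ 0 * μ 2 * S + xp 2 * yj 0 * μ 1 * μ 2 * S + (-1:ℝ) * xp 2 * yk 1 * μ 0 * μ 2 * B + xp 2 * yk 0 * μ 1 * μ 2 * B + (-2:ℝ) * xp 2 * yp 1 * μ 1 * L + (-2:ℝ) * xp 2 * yp 0 * μ 0 * L + (-1:ℝ) * xp 1 * yj 2 * μ 0 * μ 2 * S + (-2:ℝ) * xp 1 * yj 1 * μ 0 * μ 1 * S + xp 1 * yj 0 * μ 1 * μ 1 * S + (-1:ℝ) * xp 1 * yj 0 * μ 0 * μ 0 * S + (-1:ℝ) * xp 1 * yk 2 * μ 0 * μ 2 * B + (-2:ℝ) * xp 1 * yk 1 * μ 0 * μ 1 * B + xp 1 * yk 0 * μ 1 * μ 1 * B + (-1:ℝ) * xp 1 * yk 0 * μ 0 * μ 0 * B + (2:ℝ) * xp 1 * yp 2 * μ 1 * L + xp 0 * yj 2 * μ 1 * μ 2 * S + xp 0 * yj 1 * μ 1 * μ 1 * S + (-1:ℝ) * xp 0 * yj 1 * μ 0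 * μ 0 * S + (2:ℝ) * xp 0 * yj 0 * μ 0 * μ 1 * S + xp 0 * yk 2 * μ 1 * μ 2 * B + xp 0 * yk 1 * μ 1 * μ 1 * B + (-1:ℝ) * xp 0 * yk 1 * μ 0 * μ 0 * B + (2:ℝ) * xp 0 * yk 0 * μ 0 * μ 1 * B + (2:ℝ) * xp 0 * yp 2 * μ 0 * L)) ) := by
  refine Prod.ext ?_ (Prod.ext ?_ (Prod.ext ?_ ?_))
  · simp only [dualBracket, Fin.sum_univ_three, Pi.zero_apply]
    simp (config := { decide := true }) [eps, kron]
    try ring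
  all_goals
    funext i
    fin_cases i <;>
      (simp only [dualBracket, Fin.sum_univ_three, Pi.zero_apply, Fin.isValue]
       simp (config := { decide := true }) [eps, kron]
       try ring)

set_option maxHeartbeats 4000000 in
/-- (Family XI) For a unit vector `μ ∈ ℝ³`, `S ≠ 0`, `λ = L μ`, `ρ = −S/3`,
`σ_{ij} = S(μ_i μ_j − (1/3) δ_{ij})`, `χ_{ij} = B(μ_i μ_j − (1/3) δ_{ij})`,
arbitrary `θ`, and all other parameters zero, the dual bracket of the Galilei
bialgebra ansatz satisfies the Jacobi identity, and hence defines a Lie algebra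
structure. -/
theorem familyXI_jacobi (μ : Fin 3 → ℝ) (hμ : ∑ i, μ i * μ i = 1)
    (S L B θ : ℝ) (hS : S ≠ 0) :
    JacobiHolds (dualBracket 0 0 0 (fun i => L * μ i) 0 0
      0 0 θ (-S / 3)
      (fun i j => S * (μ i * μ j - (1/3) * kron i j))
      (fun i j => B * (μ i * μ j - (1/3) * kron i j))
      0) := by
  intro X Y Z
  obtain ⟨xh, xp, xk, xj⟩ := X
  obtain ⟨yh, yp, yk, yj⟩ := Y
  obtain ⟨zh, zp, zk, zj⟩ := Z
  simp only [br_eval]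
  refine Prod.ext ?_ (Prod.ext ?_ (Prod.ext ?_ ?_))
  · simp only [Prod.fst_add, Prod.fst_zero]
    simp (config := { decide := true })
    try ring
  all_goals
    simp only [Prod.fst_add, Prod.snd_add, Prod.fst_zero, Prod.snd_zero]
    funext i
    fin_cases i <;>
      (simp only [Pi.add_apply, Pi.zero_apply, Fin.isValue]
       simp (config := { decide := true })
       try ring)
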